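/- Let aR⁺ be the set of 4-tuples (a,b,g,f) of power series with a(0)=b(0)=g(0)=1, f(0)=0, f'(0)=1, with product (a,b,g,f)·(h,k,u,v) = ((a,b,g,f)·h, (b,g,f)·k, g·u(f), v(f)), where (a,b,g,f)·h = h_0 a + h_1 x b + x² g h̃̃(f) and h̃̃(x) = (h(x)−h_0−h_1 x)/x². Then aR⁺ is a group with identity (1,1,1,x), and the subset of 4-tuples of the form (a,b,1,x) is a normal subgroup with quotient isomorphic to the Riordan group. -/

import Mathlib

open PowerSeries Finset

/-- Shift: `shift h = (h - h₀)/x`, i.e. the series with coefficients `h₁, h₂, …`. -/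
noncomputable def shift (h : PowerSeries ℤ) : PowerSeries ℤ :=
  PowerSeries.mk fun n => coeff (n + 1) h

/-- Composition `h ∘ f` of formal power series (intended for `f` with zero constant term,
in which case `coeff n (f ^ k) = 0` for `k > n`). -/
noncomputable def comp (h f : PowerSeries ℤ) : PowerSeries ℤ :=
  PowerSeries.mk fun n => ∑ k ∈ Finset.range (n + 1), coeff k h * coeff n (f ^ k)

/-- Action of an almost-Riordan array `(a,g,f)` on a power series `b`:
`(a,g,f)·b = b₀ a + x g b̃(f)` where `b̃ = (b - b₀)/x`. -/
noncomputable def act (a g f b : PowerSeries ℤ) : PowerSeries ℤ :=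
  C (coeff 0 b) * a + X * g * comp (shift b) f

/-- Product of almost-Riordan arrays: `(a,g,f)·(b,u,v) = ((a,g,f)·b, g·u(f), v(f))`. -/
noncomputable def arMul (t s : PowerSeries ℤ × PowerSeries ℤ × PowerSeries ℤ) :
    PowerSeries ℤ × PowerSeries ℤ × PowerSeries ℤ :=
  (act t.1 t.2.1 t.2.2 s.1, t.2.1 * comp s.2.1 t.2.2, comp s.2.2 t.2.2)

/-- `(a,g,f)` is an almost-Riordan array: `a₀ = 1`, `g₀ = 1`, `f₀ = 0`, `f₁ = 1`. -/
def isAR (t : PowerSeries ℤ × PowerSeries ℤ × PowerSeries ℤ) : Prop :=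
  coeff 0 t.1 = 1 ∧ coeff 0 t.2.1 = 1 ∧ coeff 0 t.2.2 = 0 ∧ coeff 1 t.2.2 = 1

/-- `h̃̃ = (h − h₀ − h₁x)/x²`. -/
noncomputable def shift2 (h : PowerSeries ℤ) : PowerSeries ℤ :=
  shift (shift h)

/-- Action of a 4-tuple: `(a,b,g,f)·h = h₀ a + h₁ x b + x² g h̃̃(f)`. -/
noncomputable def act2 (a b g f h : PowerSeries ℤ) : PowerSeries ℤ :=
  C (coeff 0 h) * a + C (coeff 1 h) * (X * b) + X ^ 2 * g * comp (shift2 h) f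

/-- Product on 4-tuples:
`(a,b,g,f)·(h,k,u,v) = ((a,b,g,f)·h, (b,g,f)·k, g·u(f), v(f))`. -/
noncomputable def ar2Mul
    (t s : PowerSeries ℤ × PowerSeries ℤ × PowerSeries ℤ × PowerSeries ℤ) :
    PowerSeries ℤ × PowerSeries ℤ × PowerSeries ℤ × PowerSeries ℤ :=
  (act2 t.1 t.2.1 t.2.2.1 t.2.2.2 s.1,
   act t.2.1 t.2.2.1 t.2.2.2 s.2.1,
   t.2.2.1 * comp s.2.2.1 t.2.2.2,
   comp s.2.2.2 t.2.2.2)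

/-- Membership in `aR⁺`: `a₀ = b₀ = g₀ = 1`, `f₀ = 0`, `f₁ = 1`. -/
def isAR2 (t : PowerSeries ℤ × PowerSeries ℤ × PowerSeries ℤ × PowerSeries ℤ) : Prop :=
  coeff 0 t.1 = 1 ∧ coeff 0 t.2.1 = 1 ∧ coeff 0 t.2.2.1 = 1 ∧
    coeff 0 t.2.2.2 = 0 ∧ coeff 1 t.2.2.2 = 1

/-!
Both actions are layers of one construction. For an additive operator `L` on power series and a
column `a`, let `extendAct a L h = h₀ a + x L(h̃)`; then `act b g f = extendAct b (riordanAct g f)`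
with `riordanAct g f h = g h(f)`, and `act2 a b g f = extendAct a (act b g f)`. The composition law
`extendAct a L ∘ extendAct a' L' = extendAct (extendAct a L a') (L ∘ L')`, together with the
Riordan one (`comp` is substitution), gives associativity and the identities, and a right
inverse `M` of `L` lifts to the right inverse `extendAct (1 + x M(-ã)) M` of `extendAct a L`
when `a₀ = 1`. A monoid with right inverses is a group. The projection
`(a,b,g,f) ↦ (g,f)` is multiplicative for the Riordan product and its fibre over `(1,x)` is
`{(a,b,1,x)}`, which gives normality and the description of the cosets.
-/

lemma hasSubst_of_coeff_zero_eq_zero {f : PowerSeries ℤ} (hf : coeff 0 f = 0) : HasSubst f :=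
  HasSubst.of_constantCoeff_zero' (by rwa [← coeff_zero_eq_constantCoeff_apply])

lemma comp_eq_subst {f : PowerSeries ℤ} (hf : coeff 0 f = 0) (h : PowerSeries ℤ) :
    comp h f = h.subst f := by
  have hf' : constantCoeff f = 0 := by rwa [← coeff_zero_eq_constantCoeff_apply]
  ext n
  rw [comp, coeff_mk, coeff_subst' (hasSubst_of_coeff_zero_eq_zero hf)]
  refine (finsum_eq_sum_of_support_subset _ fun k hk => ?_).symm
  by_contra hkn
  have hnk : (n : ℕ∞) < k := by simpa using hkn
  exact hk (by dsimp only; rw [coeff_of_lt_order (φ := f ^ k) n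
    (hnk.trans_le (le_order_pow_of_constantCoeff_eq_zero k hf')), mul_zero])

lemma comp_add (h k f : PowerSeries ℤ) : comp (h + k) f = comp h f + comp k f := by
  ext n
  simp [comp, add_mul, sum_add_distrib]

@[simp] lemma comp_zero (f : PowerSeries ℤ) : comp 0 f = 0 := by
  ext n
  simp [comp]

@[simp] lemma coeff_zero_comp (h f : PowerSeries ℤ) : coeff 0 (comp h f) = coeff 0 h := by
  simp [comp]

lemma coeff_one_comp (h f : PowerSeries ℤ) : coeff 1 (comp h f) = coeff 1 h * coeff 1 f := by
  simp [comp, sum_range_succ]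

lemma comp_mul {f : PowerSeries ℤ} (hf : coeff 0 f = 0) (h k : PowerSeries ℤ) :
    comp (h * k) f = comp h f * comp k f := by
  simp only [comp_eq_subst hf, subst_mul (hasSubst_of_coeff_zero_eq_zero hf)]

lemma comp_comp {f f' : PowerSeries ℤ} (hf : coeff 0 f = 0) (hf' : coeff 0 f' = 0)
    (h : PowerSeries ℤ) : comp (comp h f') f = comp h (comp f' f) := by
  have hf'f : coeff 0 (comp f' f) = 0 := by rw [coeff_zero_comp, hf']
  rw [comp_eq_subst hf'f]
  simp only [comp_eq_subst hf, comp_eq_subst hf']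
  exact subst_comp_subst_apply (hasSubst_of_coeff_zero_eq_zero hf')
    (hasSubst_of_coeff_zero_eq_zero hf) h

@[simp] lemma comp_X (h : PowerSeries ℤ) : comp h X = h := by
  rw [comp_eq_subst (by simp), X_subst]

lemma X_comp {f : PowerSeries ℤ} (hf : coeff 0 f = 0) : comp X f = f := by
  rw [comp_eq_subst hf, subst_X (hasSubst_of_coeff_zero_eq_zero hf)]

lemma one_comp {f : PowerSeries ℤ} (hf : coeff 0 f = 0) : comp 1 f = 1 := by
  rw [comp_eq_subst hf, ← coe_substAlgHom (hasSubst_of_coeff_zero_eq_zero hf), map_one]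

lemma exists_comp_eq_X {f : PowerSeries ℤ} (hf0 : coeff 0 f = 0) (hf1 : coeff 1 f = 1) :
    ∃ f', coeff 0 f' = 0 ∧ coeff 1 f' = 1 ∧ comp f' f = X := by
  have hu : IsUnit (coeff 1 f) := by rw [hf1]; exact isUnit_one
  have h0 : coeff 0 (substInvOfIsUnit f hu) = 0 := by
    rw [coeff_zero_eq_constantCoeff_apply, constantCoeff_substInvOfIsUnit]
  have hX : comp (substInvOfIsUnit f hu) f = X := by
    rw [comp_eq_subst hf0, subst_substInvOfIsUnit_left f
      (by rwa [← coeff_zero_eq_constantCoeff_apply]) hu]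
  refine ⟨_, h0, ?_, hX⟩
  simp [hf1]

lemma X_mul_shift (h : PowerSeries ℤ) : X * shift h = h - C (coeff 0 h) := by
  rw [coeff_zero_eq_constantCoeff_apply]
  exact (sub_const_eq_X_mul_shift h).symm

@[simp] lemma coeff_zero_shift (h : PowerSeries ℤ) : coeff 0 (shift h) = coeff 1 h := by
  simp [shift]

lemma shift_add (h k : PowerSeries ℤ) : shift (h + k) = shift h + shift k := by
  ext n
  simp [shift]

lemma shift_C_mul (c : ℤ) (h : PowerSeries ℤ) : shift (C c * h) = C c * shift h := by
  ext n
  simp only [shift, coeff_mk, coeff_C_mul]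

@[simp] lemma shift_zero : shift 0 = 0 := by
  ext n
  simp [shift]

@[simp] lemma shift_X_mul (h : PowerSeries ℤ) : shift (X * h) = h := by
  ext n
  simp [shift, coeff_succ_X_mul]

@[simp] lemma shift_one : shift (1 : PowerSeries ℤ) = 0 := by
  ext n
  simp [shift, coeff_one]

noncomputable def riordanAct (g f : PowerSeries ℤ) : PowerSeries ℤ →+ PowerSeries ℤ where
  toFun h := g * comp h f
  map_zero' := by simp
  map_add' h k := by rw [comp_add, mul_add]

@[simp] lemma riordanAct_apply (g f h : PowerSeries ℤ) : riordanAct g f h = g * comp h f := rfl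

lemma riordanAct_comp_riordanAct {f f' : PowerSeries ℤ} (hf : coeff 0 f = 0)
    (hf' : coeff 0 f' = 0) (g g' : PowerSeries ℤ) :
    (riordanAct g f).comp (riordanAct g' f') = riordanAct (g * comp g' f) (comp f' f) := by
  ext h : 1
  simp only [AddMonoidHom.comp_apply, riordanAct_apply, comp_mul hf, comp_comp hf hf']
  ring

lemma riordanAct_one_X : riordanAct 1 X = AddMonoidHom.id _ := by
  ext h : 1
  simp

lemma riordanAct_comp_riordanAct_inv {g g' f f' : PowerSeries ℤ} (hf : coeff 0 f = 0)
    (hf' : coeff 0 f' = 0) (hff' : comp f' f = X) (hgg' : g * g' = 1) :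
    (riordanAct g f).comp (riordanAct (comp g' f') f') = AddMonoidHom.id _ := by
  rw [riordanAct_comp_riordanAct hf hf', comp_comp hf hf', hff', comp_X, hgg', riordanAct_one_X]

noncomputable def extendAct (a : PowerSeries ℤ) (L : PowerSeries ℤ →+ PowerSeries ℤ) :
    PowerSeries ℤ →+ PowerSeries ℤ where
  toFun h := C (coeff 0 h) * a + X * L (shift h)
  map_zero' := by simp
  map_add' h k := by
    simp only [map_add, shift_add]
    ring

lemma extendAct_apply (a : PowerSeries ℤ) (L : PowerSeries ℤ →+ PowerSeries ℤ)
    (h : PowerSeries ℤ) : extendAct a L h = C (coeff 0 h) * a + X * L (shift h) := rfl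

lemma coeff_zero_extendAct (a : PowerSeries ℤ) (L : PowerSeries ℤ →+ PowerSeries ℤ)
    (h : PowerSeries ℤ) : coeff 0 (extendAct a L h) = coeff 0 h * coeff 0 a := by
  simp [extendAct_apply]

lemma extendAct_one (a : PowerSeries ℤ) (L : PowerSeries ℤ →+ PowerSeries ℤ) :
    extendAct a L 1 = a := by
  simp [extendAct_apply]

lemma extendAct_one_id : extendAct 1 (AddMonoidHom.id _) = AddMonoidHom.id _ := by
  ext h : 1
  simp [extendAct_apply, X_mul_shift]

lemma map_C_mul (L : PowerSeries ℤ →+ PowerSeries ℤ) (c : ℤ) (h : PowerSeries ℤ) :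
    L (C c * h) = C c * L h := by
  rw [← smul_eq_C_mul, ← smul_eq_C_mul]
  exact L.toIntLinearMap.map_smul c h

lemma shift_extendAct (a : PowerSeries ℤ) (L : PowerSeries ℤ →+ PowerSeries ℤ)
    (h : PowerSeries ℤ) : shift (extendAct a L h) = C (coeff 0 h) * shift a + L (shift h) := by
  rw [extendAct_apply, shift_add, shift_C_mul, shift_X_mul]

lemma extendAct_comp_extendAct (a a' : PowerSeries ℤ) (L L' : PowerSeries ℤ →+ PowerSeries ℤ) :
    (extendAct a L).comp (extendAct a' L') = extendAct (extendAct a L a') (L.comp L') := by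
  ext h : 1
  rw [AddMonoidHom.comp_apply, extendAct_apply, coeff_zero_extendAct, shift_extendAct, map_add,
    map_C_mul, extendAct_apply, extendAct_apply, AddMonoidHom.comp_apply, map_mul]
  ring

-- `x L(M(-ã)) = -(a - a₀)`, so only `a₀ = 1` survives.
lemma extendAct_one_add_X_mul {a : PowerSeries ℤ} (ha : coeff 0 a = 1)
    {L M : PowerSeries ℤ →+ PowerSeries ℤ} (hLM : L.comp M = AddMonoidHom.id _) :
    extendAct a L (1 + X * M (-shift a)) = 1 := by
  have hL : L (M (-shift a)) = -shift a := DFunLike.congr_fun hLM _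
  rw [extendAct_apply, shift_add, shift_one, shift_X_mul, zero_add, hL, map_add, coeff_zero_one,
    coeff_zero_X_mul, add_zero, map_one, one_mul, mul_neg, X_mul_shift, ha, map_one]
  ring

lemma extendAct_comp_extendAct_inv {a : PowerSeries ℤ} (ha : coeff 0 a = 1)
    {L M : PowerSeries ℤ →+ PowerSeries ℤ} (hLM : L.comp M = AddMonoidHom.id _) :
    (extendAct a L).comp (extendAct (1 + X * M (-shift a)) M) = AddMonoidHom.id _ := by
  rw [extendAct_comp_extendAct, extendAct_one_add_X_mul ha hLM, hLM, extendAct_one_id]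

lemma act_eq_extendAct (a g f : PowerSeries ℤ) : act a g f = extendAct a (riordanAct g f) := by
  funext h
  rw [act, extendAct_apply, riordanAct_apply, mul_assoc]

lemma act2_eq_extendAct (a b g f : PowerSeries ℤ) :
    act2 a b g f = extendAct a (extendAct b (riordanAct g f)) := by
  funext h
  rw [act2, extendAct_apply, extendAct_apply, riordanAct_apply, coeff_zero_shift, shift2]
  ring

lemma act_act {f f' : PowerSeries ℤ} (hf : coeff 0 f = 0) (hf' : coeff 0 f' = 0)
    (b g b' g' h : PowerSeries ℤ) :
    act b g f (act b' g' f' h) = act (act b g f b') (g * comp g' f) (comp f' f) h := by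
  simp only [act_eq_extendAct]
  rw [← AddMonoidHom.comp_apply, extendAct_comp_extendAct, riordanAct_comp_riordanAct hf hf']

lemma act2_act2 {f f' : PowerSeries ℤ} (hf : coeff 0 f = 0) (hf' : coeff 0 f' = 0)
    (a b g a' b' g' h : PowerSeries ℤ) :
    act2 a b g f (act2 a' b' g' f' h) =
      act2 (act2 a b g f a') (act b g f b') (g * comp g' f) (comp f' f) h := by
  simp only [act2_eq_extendAct, act_eq_extendAct]
  rw [← AddMonoidHom.comp_apply, extendAct_comp_extendAct, extendAct_comp_extendAct,
    riordanAct_comp_riordanAct hf hf']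

abbrev Tuple4 := PowerSeries ℤ × PowerSeries ℤ × PowerSeries ℤ × PowerSeries ℤ

lemma ar2Mul_assoc {t s : Tuple4} (ht : coeff 0 t.2.2.2 = 0) (hs : coeff 0 s.2.2.2 = 0)
    (r : Tuple4) : ar2Mul (ar2Mul t s) r = ar2Mul t (ar2Mul s r) := by
  obtain ⟨a, b, g, f⟩ := t
  obtain ⟨a', b', g', f'⟩ := s
  simp only [ar2Mul, act2_act2 ht hs, act_act ht hs, comp_mul ht, comp_comp ht hs, mul_assoc]

lemma one_ar2Mul (t : Tuple4) : ar2Mul (1, 1, 1, X) t = t := by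
  simp only [ar2Mul, act2_eq_extendAct, act_eq_extendAct, riordanAct_one_X, extendAct_one_id,
    AddMonoidHom.id_apply, comp_X, one_mul]

lemma ar2Mul_one {t : Tuple4} (ht : coeff 0 t.2.2.2 = 0) : ar2Mul t (1, 1, 1, X) = t := by
  simp only [ar2Mul, act2_eq_extendAct, act_eq_extendAct, extendAct_one, one_comp ht, mul_one,
    X_comp ht]

lemma isAR2_one : isAR2 (1, 1, 1, X) := by
  simp [isAR2]

lemma isAR2_ar2Mul {t s : Tuple4} (ht : isAR2 t) (hs : isAR2 s) : isAR2 (ar2Mul t s) := by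
  obtain ⟨ha, hb, hg, hf0, hf1⟩ := ht
  obtain ⟨ha', hb', hg', hf0', hf1'⟩ := hs
  refine ⟨?_, ?_, ?_, ?_, ?_⟩
  · rw [ar2Mul, act2_eq_extendAct, coeff_zero_extendAct, ha, ha', mul_one]
  · rw [ar2Mul, act_eq_extendAct, coeff_zero_extendAct, hb, hb', mul_one]
  · rw [ar2Mul, coeff_zero_eq_constantCoeff_apply, map_mul, ← coeff_zero_eq_constantCoeff_apply,
      ← coeff_zero_eq_constantCoeff_apply, coeff_zero_comp, hg, hg', mul_one]
  · rw [ar2Mul, coeff_zero_comp, hf0']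
  · rw [ar2Mul, coeff_one_comp, hf1, hf1', mul_one]

lemma exists_ar2Mul_eq_one {t : Tuple4} (ht : isAR2 t) :
    ∃ s, isAR2 s ∧ ar2Mul t s = (1, 1, 1, X) := by
  obtain ⟨a, b, g, f⟩ := t
  obtain ⟨ha, hb, hg, hf0, hf1⟩ := ht
  obtain ⟨f', hf0', hf1', hf'f⟩ := exists_comp_eq_X hf0 hf1
  have hgg' : g * invOfUnit g 1 = 1 :=
    mul_invOfUnit g 1 (by rw [← coeff_zero_eq_constantCoeff_apply, hg, Units.val_one])
  set g' := comp (invOfUnit g 1) f'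
  have hR := riordanAct_comp_riordanAct_inv hf0 hf0' hf'f hgg'
  have hB := extendAct_comp_extendAct_inv hb hR
  refine ⟨(1 + X * extendAct (1 + X * riordanAct g' f' (-shift b)) (riordanAct g' f') (-shift a),
    1 + X * riordanAct g' f' (-shift b), g', f'), ⟨?_, ?_, ?_, hf0', hf1'⟩, ?_⟩
  · simp
  · simp
  · rw [coeff_zero_comp, coeff_zero_eq_constantCoeff_apply, constantCoeff_invOfUnit]
    simp
  · simp only [ar2Mul, act2_eq_extendAct, act_eq_extendAct, extendAct_one_add_X_mul ha hB,
      extendAct_one_add_X_mul hb hR, g', comp_comp hf0 hf0', hf'f, comp_X, hgg']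

abbrev AR2 := {t : Tuple4 // isAR2 t}

namespace AR2

noncomputable instance : Mul AR2 := ⟨fun t s => ⟨ar2Mul t.1 s.1, isAR2_ar2Mul t.2 s.2⟩⟩

noncomputable instance : One AR2 := ⟨⟨(1, 1, 1, X), isAR2_one⟩⟩

noncomputable instance : Inv AR2 := ⟨fun t => ⟨_, (exists_ar2Mul_eq_one t.2).choose_spec.1⟩⟩

noncomputable instance : Group AR2 :=
  Group.ofRightAxioms (fun t s _ => Subtype.ext (ar2Mul_assoc t.2.2.2.2.1 s.2.2.2.2.1 _))
    (fun t => Subtype.ext (ar2Mul_one t.2.2.2.2.1))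
    (fun t => Subtype.ext (exists_ar2Mul_eq_one t.2).choose_spec.2)

lemma val_mul (t s : AR2) : (t * s).1 = ar2Mul t.1 s.1 := rfl

lemma val_one : (1 : AR2).1 = (1, 1, 1, X) := rfl

end AR2

noncomputable def riordanMul (p q : PowerSeries ℤ × PowerSeries ℤ) :
    PowerSeries ℤ × PowerSeries ℤ :=
  (p.1 * comp q.1 p.2, comp q.2 p.2)

lemma snd_snd_ar2Mul (t s : Tuple4) : (ar2Mul t s).2.2 = riordanMul t.2.2 s.2.2 := rfl

lemma riordanMul_one_X {p : PowerSeries ℤ × PowerSeries ℤ} (hp : coeff 0 p.2 = 0) :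
    riordanMul p (1, X) = p := by
  rw [riordanMul, one_comp hp, mul_one, X_comp hp]

lemma isAR2_kernel {a b : PowerSeries ℤ} (ha : coeff 0 a = 1) (hb : coeff 0 b = 1) :
    isAR2 (a, b, 1, X) := by
  simp [isAR2, ha, hb]

lemma exists_ar2Mul_kernel_ar2Mul {t s : Tuple4} (ht : isAR2 t) (hs : isAR2 s)
    (hts : ar2Mul t s = (1, 1, 1, X)) {a b : PowerSeries ℤ} (ha : coeff 0 a = 1)
    (hb : coeff 0 b = 1) : ∃ a' b' : PowerSeries ℤ, coeff 0 a' = 1 ∧ coeff 0 b' = 1 ∧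
      ar2Mul (ar2Mul t (a, b, 1, X)) s = (a', b', 1, X) := by
  have hp := isAR2_ar2Mul (isAR2_ar2Mul ht (isAR2_kernel ha hb)) hs
  refine ⟨_, _, hp.1, hp.2.1, Prod.ext rfl (Prod.ext rfl ?_)⟩
  rw [snd_snd_ar2Mul, snd_snd_ar2Mul, riordanMul_one_X ht.2.2.2.1, ← snd_snd_ar2Mul, hts]

lemma exists_ar2Mul_kernel_eq_iff {t t' : Tuple4} (ht : isAR2 t) (ht' : isAR2 t') :
    (∃ a b : PowerSeries ℤ, coeff 0 a = 1 ∧ coeff 0 b = 1 ∧ ar2Mul t (a, b, 1, X) = t') ↔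
      t'.2.2 = t.2.2 := by
  constructor
  · rintro ⟨a, b, -, -, rfl⟩
    exact riordanMul_one_X ht.2.2.2.1
  · intro h
    let T : AR2 := ⟨t, ht⟩
    let T' : AR2 := ⟨t', ht'⟩
    have hn : (T⁻¹ * T').1.2.2 = (1, X) := by
      rw [AR2.val_mul, snd_snd_ar2Mul, show T'.1.2.2 = T.1.2.2 from h, ← snd_snd_ar2Mul,
        ← AR2.val_mul, inv_mul_cancel, AR2.val_one]
    refine ⟨_, _, (T⁻¹ * T').2.1, (T⁻¹ * T').2.2.1, ?_⟩
    rw [← hn]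
    exact congrArg Subtype.val (mul_inv_cancel_left T T')

/-- `aR⁺` is a group with identity `(1,1,1,x)`, the 4-tuples of the
form `(a,b,1,x)` are a normal subgroup, and the quotient is isomorphic to the
Riordan group (cosets correspond precisely to the Riordan part `(g,f)`). -/
theorem statement19 :
    (∀ t s, isAR2 t → isAR2 s → isAR2 (ar2Mul t s)) ∧
    (∀ t s r, isAR2 t → isAR2 s → isAR2 r →
      ar2Mul (ar2Mul t s) r = ar2Mul t (ar2Mul s r)) ∧
    isAR2 (1, 1, 1, X) ∧
    (∀ t, isAR2 t → ar2Mul (1, 1, 1, X) t = t ∧ ar2Mul t (1, 1, 1, X) = t) ∧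
    (∀ t, isAR2 t → ∃ s, isAR2 s ∧
      ar2Mul t s = (1, 1, 1, X) ∧ ar2Mul s t = (1, 1, 1, X)) ∧
    (∀ t s, isAR2 t → isAR2 s →
      ar2Mul t s = (1, 1, 1, X) → ar2Mul s t = (1, 1, 1, X) →
      ∀ a b : PowerSeries ℤ, coeff 0 a = 1 → coeff 0 b = 1 →
        ∃ a' b' : PowerSeries ℤ, coeff 0 a' = 1 ∧ coeff 0 b' = 1 ∧
          ar2Mul (ar2Mul t (a, b, 1, X)) s = (a', b', 1, X)) ∧
    (∀ t t', isAR2 t → isAR2 t' →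
      ((∃ a b : PowerSeries ℤ, coeff 0 a = 1 ∧ coeff 0 b = 1 ∧
          ar2Mul t (a, b, 1, X) = t') ↔ t'.2.2 = t.2.2)) := by
  refine ⟨fun _ _ => isAR2_ar2Mul, fun _ _ r ht hs _ => ar2Mul_assoc ht.2.2.2.1 hs.2.2.2.1 r,
    isAR2_one, fun t ht => ⟨one_ar2Mul t, ar2Mul_one ht.2.2.2.1⟩, fun t ht => ?_,
    fun _ _ ht hs hts _ _ _ ha hb => exists_ar2Mul_kernel_ar2Mul ht hs hts ha hb,
    fun _ _ => exists_ar2Mul_kernel_eq_iff⟩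
  let T : AR2 := ⟨t, ht⟩
  exact ⟨T⁻¹.1, T⁻¹.2, congrArg Subtype.val (mul_inv_cancel T),
    congrArg Subtype.val (inv_mul_cancel T)⟩
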